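/- Let Q be the Lorentzian form on ℝ^k (signature (1,k-1)), ω with Q(ω,ω)>0, c arbitrary, and define f(t) = (1/2)Q(ω + tc, ω + tc) on the set where f > 0. Then log f is concave there. (This is the abstract form of Theorem 5.1: b⁺=1 for reduced spaces implies log-concavity of the Duistermaat–Heckman function along line segments.) -/

import Mathlib

/-!
Along the line `x(t) = ω + t c` one has `f = Q(x,x)/2`, `f' = Q(x,c)` and `f'' = Q(c,c)`, so
`f'' f - f'² ≤ 0` is a reverse Cauchy–Schwarz inequality `Q(x,x) Q(c,c) ≤ Q(x,c)²` at the
timelike vector `x`. It holds because the quadratic `s ↦ Q(c + s x, c + s x)` has positive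
leading coefficient `Q(x,x)` but is `≤ 0` at the `s` killing the time coordinate, where `Q` is
minus a sum of squares; hence its discriminant is nonnegative.
-/

open Real Set

theorem concaveOn_log_comp_of_deriv2_mul_le_sq {D : Set ℝ} (hD : Convex ℝ D)
    {f f' f'' : ℝ → ℝ} (hf : ∀ t ∈ D, HasDerivAt f (f' t) t)
    (hf' : ∀ t ∈ D, HasDerivAt f' (f'' t) t) (hpos : ∀ t ∈ D, 0 < f t)
    (h : ∀ t ∈ D, f'' t * f t - f' t ^ 2 ≤ 0) :
    ConcaveOn ℝ D (fun t => log (f t)) := by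
  refine concaveOn_of_hasDerivWithinAt2_nonpos hD (f' := fun t => f' t / f t)
    (f'' := fun t => (f'' t * f t - f' t * f' t) / f t ^ 2) ?_ ?_ ?_ ?_
  · exact fun t ht => ((hf t ht).continuousAt.log (hpos t ht).ne').continuousWithinAt
  · exact fun t ht => ((hf t (interior_subset ht)).log
      (hpos t (interior_subset ht)).ne').hasDerivWithinAt
  · exact fun t ht => ((hf' t (interior_subset ht)).div (hf t (interior_subset ht))
      (hpos t (interior_subset ht)).ne').hasDerivWithinAt
  · exact fun t ht => div_nonpos_of_nonpos_of_nonneg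
      (by simpa only [sq] using h t (interior_subset ht)) (sq_nonneg _)

namespace LinearMap.BilinForm

variable {E : Type*} [AddCommGroup E] [Module ℝ E] (B : LinearMap.BilinForm ℝ E) (ω c : E)

theorem apply_add_smul_left (t : ℝ) : B (ω + t • c) c = B ω c + t * B c c := by
  simp

theorem hasDerivAt_apply_add_smul_left (t : ℝ) :
    HasDerivAt (fun s : ℝ => B (ω + s • c) c) (B c c) t := by
  simp only [apply_add_smul_left]
  simpa using ((hasDerivAt_id t).mul_const (B c c)).const_add (B ω c)

variable {B}

theorem IsSymm.apply_add_smul_self (hB : B.IsSymm) (t : ℝ) :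
    B (ω + t • c) (ω + t • c) = B ω ω + 2 * t * B ω c + t ^ 2 * B c c := by
  simp only [map_add, map_smul, LinearMap.add_apply, smul_eq_mul, smul_apply, hB.eq c ω]
  ring

theorem IsSymm.hasDerivAt_half_apply_add_smul_self (hB : B.IsSymm) (t : ℝ) :
    HasDerivAt (fun s : ℝ => 1 / 2 * B (ω + s • c) (ω + s • c)) (B (ω + t • c) c) t := by
  simp only [hB.apply_add_smul_self, apply_add_smul_left]
  have h := ((((hasDerivAt_id t).mul_const (2 * B ω c)).add
    ((hasDerivAt_pow 2 t).mul_const (B c c))).const_add (B ω ω)).const_mul (1 / 2 : ℝ)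
  refine (h.congr_deriv (by push_cast; ring)).congr_of_eventuallyEq (.of_forall fun s => ?_)
  simp only [Pi.add_apply, id_eq]
  ring

theorem IsSymm.mul_le_sq_of_apply_add_smul_self_nonpos (hB : B.IsSymm) {x y : E}
    (hx : 0 < B x x) {s : ℝ} (hs : B (y + s • x) (y + s • x) ≤ 0) :
    B x x * B y y ≤ B x y ^ 2 := by
  rw [hB.apply_add_smul_self, hB.eq y x] at hs
  nlinarith [sq_nonneg (B x x * s + B x y)]

end LinearMap.BilinForm

def lorentz (n : ℕ) : LinearMap.BilinForm ℝ (Fin (n + 1) → ℝ) :=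
  LinearMap.mk₂ ℝ (fun x y => x 0 * y 0 - ∑ i : Fin n, x i.succ * y i.succ)
    (fun x₁ x₂ y => by simp only [Pi.add_apply, add_mul, Finset.sum_add_distrib]; ring)
    (fun a x y => by simp only [Pi.smul_apply, smul_eq_mul, mul_assoc, ← Finset.mul_sum]; ring)
    (fun x y₁ y₂ => by simp only [Pi.add_apply, mul_add, Finset.sum_add_distrib]; ring)
    (fun a x y => by
      simp only [Pi.smul_apply, smul_eq_mul, mul_left_comm _ a, ← Finset.mul_sum]; ring)

section Lorentz

variable {n : ℕ}

theorem lorentz_apply (x y : Fin (n + 1) → ℝ) :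
    lorentz n x y = x 0 * y 0 - ∑ i : Fin n, x i.succ * y i.succ :=
  rfl

theorem lorentz_isSymm : (lorentz n).IsSymm :=
  ⟨fun x y => by simp only [lorentz_apply, mul_comm]⟩

theorem lorentz_apply_self_nonpos_of_apply_zero {v : Fin (n + 1) → ℝ} (hv : v 0 = 0) :
    lorentz n v v ≤ 0 := by
  rw [lorentz_apply, hv, zero_mul, zero_sub, neg_nonpos]
  exact Finset.sum_nonneg fun i _ => mul_self_nonneg _

theorem lorentz_mul_le_sq {x : Fin (n + 1) → ℝ} (hx : 0 < lorentz n x x) (y : Fin (n + 1) → ℝ) :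
    lorentz n x x * lorentz n y y ≤ lorentz n x y ^ 2 := by
  have hx₀ : x 0 ≠ 0 := fun h => (lorentz_apply_self_nonpos_of_apply_zero h).not_gt hx
  refine lorentz_isSymm.mul_le_sq_of_apply_add_smul_self_nonpos hx
    (s := -(y 0 / x 0)) (lorentz_apply_self_nonpos_of_apply_zero ?_)
  simp only [Pi.add_apply, Pi.smul_apply, smul_eq_mul]
  field_simp
  ring

end Lorentz

theorem stmt_16_general (n : ℕ)
    (Q : (Fin (n + 1) → ℝ) → (Fin (n + 1) → ℝ) → ℝ)
    (hQ : Q = fun x y => x 0 * y 0 - ∑ i : Fin n, x i.succ * y i.succ)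
    (ω c : Fin (n + 1) → ℝ)
    (f : ℝ → ℝ) (hf : f = fun t => (1 / 2) * Q (ω + t • c) (ω + t • c))
    (a b : ℝ) (hpos : ∀ t ∈ Set.Ioo a b, 0 < f t) :
    (∀ t ∈ Set.Ioo a b, deriv (deriv f) t * f t - (deriv f t) ^ 2 ≤ 0) ∧
    ConcaveOn ℝ (Set.Ioo a b) (fun t => Real.log (f t)) := by
  replace hf : f = fun t => 1 / 2 * lorentz n (ω + t • c) (ω + t • c) := by rw [hf, hQ]; rfl
  set f' : ℝ → ℝ := fun t => lorentz n (ω + t • c) c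
  have hf' : ∀ t, HasDerivAt f (f' t) t := fun t =>
    hf ▸ lorentz_isSymm.hasDerivAt_half_apply_add_smul_self ω c t
  have hf'' : ∀ t, HasDerivAt f' (lorentz n c c) t :=
    LinearMap.BilinForm.hasDerivAt_apply_add_smul_left (lorentz n) ω c
  have hderiv : deriv f = f' := funext fun t => (hf' t).deriv
  have hderiv2 : deriv f' = fun _ => lorentz n c c := funext fun t => (hf'' t).deriv
  have hkey : ∀ t ∈ Ioo a b, lorentz n c c * f t - f' t ^ 2 ≤ 0 := by
    intro t ht
    have hx : 0 < lorentz n (ω + t • c) (ω + t • c) := by simpa [hf] using hpos t ht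
    have := lorentz_mul_le_sq hx c
    rw [hf]
    nlinarith [sq_nonneg (f' t)]
  refine ⟨fun t ht => ?_, concaveOn_log_comp_of_deriv2_mul_le_sq (convex_Ioo a b)
    (fun t _ => hf' t) (fun t _ => hf'' t) hpos hkey⟩
  rw [hderiv, hderiv2]
  exact hkey t ht

theorem stmt_16 (n : ℕ)
    (Q : (Fin (n + 1) → ℝ) → (Fin (n + 1) → ℝ) → ℝ)
    (hQ : Q = fun x y => x 0 * y 0 - ∑ i : Fin n, x i.succ * y i.succ)
    (ω c : Fin (n + 1) → ℝ) (hω : 0 < Q ω ω)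
    (f : ℝ → ℝ) (hf : f = fun t => (1 / 2) * Q (ω + t • c) (ω + t • c))
    (a b : ℝ) (hpos : ∀ t ∈ Set.Ioo a b, 0 < f t) :
    (∀ t ∈ Set.Ioo a b, deriv (deriv f) t * f t - (deriv f t) ^ 2 ≤ 0) ∧
    ConcaveOn ℝ (Set.Ioo a b) (fun t => Real.log (f t)) :=
  stmt_16_general n Q hQ ω c f hf a b hpos
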